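/- A finite matroid M is pseudomodular if and only if for all flats A, B, C of M: whenever r(A/B) = r(A/C) = r(A/cl(B ∪ C)), it follows that r(A/B ∩ C) = r(A/B). -/

import Mathlib

/-- A matroid on a finite ground set `N`, given by an integer-valued rank
function satisfying the standard rank axioms. -/
structure FinMatroid (N : Type) [Fintype N] [DecidableEq N] where
  r : Finset N → ℤ
  r_nonneg : ∀ A, 0 ≤ r A
  r_le_card : ∀ A, r A ≤ (A.card : ℤ)
  r_mono : ∀ ⦃A B : Finset N⦄, A ⊆ B → r A ≤ r B
  submodular : ∀ A B, r (A ∪ B) + r (A ∩ B) ≤ r A + r B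

namespace FinMatroid

variable {N : Type} [Fintype N] [DecidableEq N]

/-- A set `F` is a flat if adding any element outside of `F` increases the rank. -/
def IsFlat (M : FinMatroid N) (F : Finset N) : Prop :=
  ∀ n ∉ F, M.r F < M.r (insert n F)

instance (M : FinMatroid N) (F : Finset N) : Decidable (M.IsFlat F) := by
  unfold IsFlat; infer_instance

/-- The Δ function of a (multi-indexed) family of sets: `Δ(C) = Σ_{S ⊆ I} (−1)^{|S|} r(F_S)`,
where `F_S` is the intersection of the members indexed by `S` for nonempty `S`, and
`F_∅` is the union of all members of the family. -/
def delta (M : FinMatroid N) {ι : Type} [Fintype ι] [DecidableEq ι]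
    (F : ι → Finset N) : ℤ :=
  ∑ S : Finset ι, (-1 : ℤ) ^ S.card *
    M.r (if S.Nonempty then S.inf F else Finset.univ.sup F)

/-- `M` is `n`-flat if `Δ(C) ≤ 0` for every family `C` of at most `n` flats. -/
def NFlat (M : FinMatroid N) (n : ℕ) : Prop :=
  ∀ (ι : Type) (_ : Fintype ι) (_ : DecidableEq ι) (F : ι → Finset N),
    Fintype.card ι ≤ n → (∀ i, M.IsFlat (F i)) → M.delta F ≤ 0

/-- `M` is totally flat if `Δ(C) ≤ 0` for every finite family `C` of flats. -/
def TotallyFlat (M : FinMatroid N) : Prop :=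
  ∀ (ι : Type) (_ : Fintype ι) (_ : DecidableEq ι) (F : ι → Finset N),
    (∀ i, M.IsFlat (F i)) → M.delta F ≤ 0

/-- `r(A/B) := r(A ∪ B) − r(B)`, the rank of `A` after contracting `B`. -/
def relRk (M : FinMatroid N) (A B : Finset N) : ℤ :=
  M.r (A ∪ B) - M.r B

/-- `B₀` is the pseudointersection of `A` and `B`: a flat `B₀ ⊆ B` such that for every
flat `B₁ ⊆ B`, `r(A/B₁) = r(A/B)` if and only if `B₀ ⊆ B₁`. -/
def IsPseudoInter (M : FinMatroid N) (A B B₀ : Finset N) : Prop :=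
  M.IsFlat B₀ ∧ B₀ ⊆ B ∧
    ∀ B₁, M.IsFlat B₁ → B₁ ⊆ B → (M.relRk A B₁ = M.relRk A B ↔ B₀ ⊆ B₁)

/-- `M` is pseudomodular if the pseudointersection of `A` and `B` exists for
all flats `A`, `B`. -/
def Pseudomodular (M : FinMatroid N) : Prop :=
  ∀ A B, M.IsFlat A → M.IsFlat B → ∃ B₀, M.IsPseudoInter A B B₀

/-- The closure of `A`: the smallest flat containing `A`, i.e. the intersection
of all flats containing `A`. -/
def cl (M : FinMatroid N) (A : Finset N) : Finset N :=
  Finset.univ.filter (fun x => ∀ F : Finset N, M.IsFlat F → A ⊆ F → x ∈ F)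

/-- A set `S` is cyclic if removing any element of `S` does not change its rank. -/
def Cyclic (M : FinMatroid N) (S : Finset N) : Prop :=
  ∀ n ∈ S, M.r (S.erase n) = M.r S

/-- A circuit is a minimal dependent set: it is dependent, and every proper
subset is independent. -/
def IsCircuit (M : FinMatroid N) (S : Finset N) : Prop :=
  M.r S < (S.card : ℤ) ∧ ∀ T ⊂ S, M.r T = (T.card : ℤ)

variable {M : FinMatroid N}

lemma relRk_le_relRk_of_subset (A : Finset N) {B₁ B₂ : Finset N} (h : B₁ ⊆ B₂) :
    M.relRk A B₂ ≤ M.relRk A B₁ := by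
  have hsub := M.submodular (A ∪ B₁) B₂
  rw [Finset.union_assoc, Finset.union_eq_right.mpr h] at hsub
  have hmono := M.r_mono (Finset.subset_inter Finset.subset_union_right h :
    B₁ ⊆ (A ∪ B₁) ∩ B₂)
  unfold relRk
  linarith

lemma relRk_eq_of_subset_of_subset (A : Finset N) {B₀ B₁ B : Finset N} (h₀ : B₀ ⊆ B₁)
    (h₁ : B₁ ⊆ B) (heq : M.relRk A B₀ = M.relRk A B) : M.relRk A B₁ = M.relRk A B :=
  le_antisymm (heq ▸ relRk_le_relRk_of_subset A h₀) (relRk_le_relRk_of_subset A h₁)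

lemma isFlat_univ (M : FinMatroid N) : M.IsFlat Finset.univ :=
  fun n hn => absurd (Finset.mem_univ n) hn

lemma IsFlat.r_lt_r_insert {F X : Finset N} (hF : M.IsFlat F) (hX : X ⊆ F) {n : N}
    (hn : n ∉ F) : M.r X < M.r (insert n X) := by
  have hunion : insert n X ∪ F = insert n F := by
    rw [Finset.insert_union, Finset.union_eq_right.mpr hX]
  have hinter : insert n X ∩ F = X := by
    rw [Finset.insert_inter_of_notMem hn, Finset.inter_eq_left.mpr hX]
  have hsub := M.submodular (insert n X) F
  rw [hunion, hinter] at hsub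
  linarith [hF n hn]

lemma IsFlat.inter {F G : Finset N} (hF : M.IsFlat F) (hG : M.IsFlat G) :
    M.IsFlat (F ∩ G) := by
  intro n hn
  rcases not_and_or.mp (Finset.mem_inter.not.mp hn) with hnF | hnG
  · exact hF.r_lt_r_insert Finset.inter_subset_left hnF
  · exact hG.r_lt_r_insert Finset.inter_subset_right hnG

lemma exists_least_isFlat (P : Finset N → Prop) (hne : ∃ F, M.IsFlat F ∧ P F)
    (hinter : ∀ F G, M.IsFlat F → P F → M.IsFlat G → P G → P (F ∩ G)) :
    ∃ F₀, M.IsFlat F₀ ∧ P F₀ ∧ ∀ F, M.IsFlat F → P F → F₀ ⊆ F := by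
  classical
  set S := Finset.univ.filter fun F => M.IsFlat F ∧ P F
  have hS : S.Nonempty := by
    obtain ⟨F, hF⟩ := hne
    exact ⟨F, Finset.mem_filter.mpr ⟨Finset.mem_univ F, hF⟩⟩
  have hinf : M.IsFlat (S.inf' hS id) ∧ P (S.inf' hS id) :=
    Finset.inf'_induction (p := fun F => M.IsFlat F ∧ P F) hS id
      (fun F hF G hG => ⟨hF.1.inter hG.1, hinter F G hF.1 hF.2 hG.1 hG.2⟩)
      (fun F hF => (Finset.mem_filter.mp hF).2)
  exact ⟨_, hinf.1, hinf.2, fun F hF hP =>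
    Finset.inf'_le id (Finset.mem_filter.mpr ⟨Finset.mem_univ F, hF, hP⟩)⟩

lemma subset_cl (M : FinMatroid N) (A : Finset N) : A ⊆ M.cl A := by
  intro x hx
  simp only [cl, Finset.mem_filter, Finset.mem_univ, true_and]
  exact fun F _ hAF => hAF hx

lemma IsFlat.cl_subset_of_subset {A F : Finset N} (hF : M.IsFlat F) (hAF : A ⊆ F) :
    M.cl A ⊆ F := by
  intro x hx
  simp only [cl, Finset.mem_filter] at hx
  exact hx.2 F hF hAF

lemma isFlat_cl (M : FinMatroid N) (A : Finset N) : M.IsFlat (M.cl A) := by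
  obtain ⟨F₀, hF₀, hAF₀, hleast⟩ := M.exists_least_isFlat (fun F => A ⊆ F)
    ⟨Finset.univ, M.isFlat_univ, Finset.subset_univ A⟩
    (fun _ _ _ hF _ hG => Finset.subset_inter hF hG)
  have hcl : M.cl A = F₀ := by
    refine (hF₀.cl_subset_of_subset hAF₀).antisymm fun x hx => ?_
    simp only [cl, Finset.mem_filter, Finset.mem_univ, true_and]
    exact fun F hF hAF => hleast F hF hAF hx
  exact hcl ▸ hF₀

lemma IsPseudoInter.relRk_eq_iff {A D B₀ B : Finset N} (hB₀ : M.IsPseudoInter A D B₀)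
    (hB : M.IsFlat B) (hBD : B ⊆ D) : M.relRk A B = M.relRk A D ↔ B₀ ⊆ B :=
  hB₀.2.2 B hB hBD

lemma Pseudomodular.relRk_inter_eq (h : M.Pseudomodular) {A B C : Finset N}
    (hA : M.IsFlat A) (hB : M.IsFlat B) (hC : M.IsFlat C)
    (hBC : M.relRk A B = M.relRk A C) (hBD : M.relRk A B = M.relRk A (M.cl (B ∪ C))) :
    M.relRk A (B ∩ C) = M.relRk A B := by
  obtain ⟨B₀, hB₀⟩ := h A _ hA (M.isFlat_cl (B ∪ C))
  have hB_sub : B ⊆ M.cl (B ∪ C) := Finset.subset_union_left.trans (M.subset_cl _)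
  have hC_sub : C ⊆ M.cl (B ∪ C) := Finset.subset_union_right.trans (M.subset_cl _)
  have hB₀B : B₀ ⊆ B := (hB₀.relRk_eq_iff hB hB_sub).mp hBD
  have hB₀C : B₀ ⊆ C := (hB₀.relRk_eq_iff hC hC_sub).mp (hBC.symm.trans hBD)
  rw [(hB₀.relRk_eq_iff (hB.inter hC) (Finset.inter_subset_left.trans hB_sub)).mpr
    (Finset.subset_inter hB₀B hB₀C), hBD]

/-- The pseudointersection of `A` and `B` is the least flat `F ⊆ B` with `r(A/F) = r(A/B)`;
the hypothesis says exactly that these flats are closed under intersection. -/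
lemma pseudomodular_of_relRk_inter_eq
    (h : ∀ A B C, M.IsFlat A → M.IsFlat B → M.IsFlat C →
      M.relRk A B = M.relRk A C → M.relRk A B = M.relRk A (M.cl (B ∪ C)) →
      M.relRk A (B ∩ C) = M.relRk A B) :
    M.Pseudomodular := by
  intro A B hA hB
  have hinter : ∀ F G, M.IsFlat F → (F ⊆ B ∧ M.relRk A F = M.relRk A B) →
      M.IsFlat G → (G ⊆ B ∧ M.relRk A G = M.relRk A B) →
      F ∩ G ⊆ B ∧ M.relRk A (F ∩ G) = M.relRk A B := by
    rintro F G hF ⟨hFB, hFr⟩ hG ⟨hGB, hGr⟩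
    have hclB : M.cl (F ∪ G) ⊆ B := hB.cl_subset_of_subset (Finset.union_subset hFB hGB)
    have hFcl : M.relRk A F = M.relRk A (M.cl (F ∪ G)) := hFr.trans
      (relRk_eq_of_subset_of_subset A (Finset.subset_union_left.trans (M.subset_cl _)) hclB
        hFr).symm
    exact ⟨Finset.inter_subset_left.trans hFB,
      (h A F G hA hF hG (hFr.trans hGr.symm) hFcl).trans hFr⟩
  obtain ⟨B₀, hB₀, ⟨hB₀B, hB₀r⟩, hleast⟩ :=
    M.exists_least_isFlat (fun F => F ⊆ B ∧ M.relRk A F = M.relRk A B)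
      ⟨B, hB, subset_rfl, rfl⟩ hinter
  exact ⟨B₀, hB₀, hB₀B, fun B₁ hB₁ hB₁B =>
    ⟨fun hr => hleast B₁ hB₁ ⟨hB₁B, hr⟩,
      fun hsub => relRk_eq_of_subset_of_subset A hsub hB₁B hB₀r⟩⟩

end FinMatroid

/-- A finite matroid is pseudomodular if and only if for all flats `A, B, C`:
whenever `r(A/B) = r(A/C) = r(A/cl(B ∪ C))`, it follows that `r(A/B ∩ C) = r(A/B)`. -/
theorem pseudomodular_iff {N : Type} [Fintype N] [DecidableEq N]
    (M : FinMatroid N) :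
    M.Pseudomodular ↔
      ∀ A B C, M.IsFlat A → M.IsFlat B → M.IsFlat C →
        M.relRk A B = M.relRk A C →
        M.relRk A B = M.relRk A (M.cl (B ∪ C)) →
        M.relRk A (B ∩ C) = M.relRk A B :=
  ⟨fun h _ _ _ hA hB hC => h.relRk_inter_eq hA hB hC, FinMatroid.pseudomodular_of_relRk_inter_eq⟩
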